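/- Let (𝔣, 𝔱, k) be a unit-speed space-form curve frame on an open interval I with data (𝔭, 𝔮, χ, κ), let λ, μ ∈ ℝ, and define 𝔯 : I → V by 𝔯 = −(kκ + λ)·𝔣 + ((χ/2)k² + μ)·𝔱 − k′·𝔣′ + k·𝔮 − (k²/2)·𝔭. Then: (i) B(𝔱(t) + (k(t)/2)·𝔣(t), 𝔯(t)) = 0 for all t ∈ I; (ii) 𝔯′ = −(k″ + (χ/2)k³ + (μ + κ)k + λ)·𝔣′ on I, and hence 𝔯 is constant on I if and only if k″ + (χ/2)k³ + (μ + κ)k + λ = 0 on I; (iii) for every t ∈ I, if λ ≠ 0 or μ ≠ 0 or k(t) ≠ 0 or k′(t) ≠ 0, then 𝔯(t) ≠ 0. In particular, a constrained elastic curve admits a nonzero constant vector 𝔯 such that the enveloped circle congruence 𝔱 + (k/2)𝔣 of geodesic curvature k/2 lies in the fixed linear circle complex determined by 𝔯. -/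

import Mathlib

noncomputable section

/-- `V = ℝ⁵`. -/
abbrev V : Type := Fin 5 → ℝ

/-- The symmetric bilinear form of signature (3,2) on `V`. -/
def bB (x y : V) : ℝ := x 0 * y 0 + x 1 * y 1 + x 2 * y 2 - x 3 * y 3 - x 4 * y 4

/-- The skew-symmetric endomorphism `a ∧ b` of `V`. -/
def wedge (a b : V) : V →L[ℝ] V :=
  LinearMap.toContinuousLinearMap
    { toFun := fun x => bB a x • b - bB b x • a
      map_add' := by
        intro x y
        have h1 : bB a (x + y) = bB a x + bB a y := by simp [bB]; ring
        have h2 : bB b (x + y) = bB b x + bB b y := by simp [bB]; ring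
        try dsimp only
        rw [h1, h2]; module
      map_smul' := by
        intro c x
        have h1 : bB a (c • x) = c * bB a x := by simp [bB]; ring
        have h2 : bB b (c • x) = c * bB b x := by simp [bB]; ring
        try dsimp only
        rw [h1, h2]
        simp only [RingHom.id_apply]
        module }

/-- Membership in `C(t) = span{σ₁(t), σ₂(t)}`. -/
def memC (σ₁ σ₂ : ℝ → V) (t : ℝ) (x : V) : Prop :=
  ∃ a b : ℝ, x = a • σ₁ t + b • σ₂ t

/-- A Legendre curve frame on an open interval `I`. -/
structure LegendreCurveFrame (I : Set ℝ) (σ₁ σ₂ : ℝ → V) : Prop where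
  isOpen : IsOpen I
  ordConn : I.OrdConnected
  smooth₁ : ContDiffOn ℝ (⊤ : ℕ∞) σ₁ I
  smooth₂ : ContDiffOn ℝ (⊤ : ℕ∞) σ₂ I
  indep : ∀ t ∈ I, ∀ a b : ℝ, a • σ₁ t + b • σ₂ t = 0 → a = 0 ∧ b = 0
  iso₁₁ : ∀ t ∈ I, bB (σ₁ t) (σ₁ t) = 0
  iso₁₂ : ∀ t ∈ I, bB (σ₁ t) (σ₂ t) = 0
  iso₂₂ : ∀ t ∈ I, bB (σ₂ t) (σ₂ t) = 0
  d₁₁ : ∀ t ∈ I, bB (deriv σ₁ t) (σ₁ t) = 0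
  d₁₂ : ∀ t ∈ I, bB (deriv σ₁ t) (σ₂ t) = 0
  d₂₁ : ∀ t ∈ I, bB (deriv σ₂ t) (σ₁ t) = 0
  d₂₂ : ∀ t ∈ I, bB (deriv σ₂ t) (σ₂ t) = 0
  rank3 : ∀ t ∈ I,
    Module.finrank ℝ
      ↥(Submodule.span ℝ ({σ₁ t, σ₂ t, deriv σ₁ t, deriv σ₂ t} : Set V)) = 3

/-- The curve `C` is circular. -/
def Circular (I : Set ℝ) (σ₁ σ₂ : ℝ → V) : Prop :=
  ∃ v : V, v ≠ 0 ∧ ∀ t ∈ I, memC σ₁ σ₂ t v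

/-- `ξ(t)` is a sum of endomorphisms `a ∧ b` with `a ∈ C(t)` and `b ∈ C(t)^⊥`. -/
def PolarForm (I : Set ℝ) (σ₁ σ₂ : ℝ → V) (ξ : ℝ → V →L[ℝ] V) : Prop :=
  ∀ t ∈ I, ∃ b₁ b₂ : V,
    bB b₁ (σ₁ t) = 0 ∧ bB b₁ (σ₂ t) = 0 ∧ bB b₂ (σ₁ t) = 0 ∧ bB b₂ (σ₂ t) = 0 ∧
    ξ t = wedge (σ₁ t) b₁ + wedge (σ₂ t) b₂

/-- `Q` represents the quadratic differential of `ξ`. -/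
def IsQuadDiff (I : Set ℝ) (σ₁ σ₂ : ℝ → V) (ξ : ℝ → V →L[ℝ] V) (Q : ℝ → ℝ) : Prop :=
  ∀ t ∈ I, ∃ a b c d : ℝ,
    ξ t (deriv σ₁ t) = a • σ₁ t + b • σ₂ t ∧
    ξ t (deriv σ₂ t) = c • σ₁ t + d • σ₂ t ∧
    Q t = a + d

/-- `ξ` is a polarisation of the curve `C`. -/
def IsPolarisation (I : Set ℝ) (σ₁ σ₂ : ℝ → V) (ξ : ℝ → V →L[ℝ] V) : Prop :=
  ContDiffOn ℝ (⊤ : ℕ∞) ξ I ∧ PolarForm I σ₁ σ₂ ξ ∧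
  ∃ Q : ℝ → ℝ, IsQuadDiff I σ₁ σ₂ ξ Q ∧ ∃ t ∈ I, Q t ≠ 0

/-- `(p₀, p₁)` is a linear conserved quantity of `d + tξ`. -/
def IsLCQ (I : Set ℝ) (σ₁ σ₂ : ℝ → V) (ξ : ℝ → V →L[ℝ] V) (p₀ : V) (p₁ : ℝ → V) : Prop :=
  ContDiffOn ℝ (⊤ : ℕ∞) p₁ I ∧
  (∀ t ∈ I, memC σ₁ σ₂ t (p₁ t)) ∧
  ∀ t ∈ I, deriv p₁ t + ξ t p₀ = 0


/-- A unit-speed space-form curve frame with data `(p, q, χ, κ)`: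
`f` is the light-cone lift of a unit-speed curve of geodesic curvature `k` in the
2-dimensional space form of constant curvature `κ`, and `tf` its tangent congruence. -/
structure SpaceFormFrame (I : Set ℝ) (p q : V) (χ κ : ℝ)
    (f tf : ℝ → V) (k : ℝ → ℝ) : Prop where
  isOpen : IsOpen I
  ordConn : I.OrdConnected
  hχ : χ = 1 ∨ χ = -1
  hq0 : q ≠ 0
  hpp : bB p p = -χ
  hqq : bB q q = -κ
  hpq : bB p q = 0
  smoothf : ContDiffOn ℝ (⊤ : ℕ∞) f I
  smootht : ContDiffOn ℝ (⊤ : ℕ∞) tf I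
  smoothk : ContDiffOn ℝ (⊤ : ℕ∞) k I
  hff : ∀ s ∈ I, bB (f s) (f s) = 0
  htt : ∀ s ∈ I, bB (tf s) (tf s) = 0
  hft : ∀ s ∈ I, bB (f s) (tf s) = 0
  hfq : ∀ s ∈ I, bB (f s) q = -1
  hfp : ∀ s ∈ I, bB (f s) p = 0
  htp : ∀ s ∈ I, bB (tf s) p = -1
  htq : ∀ s ∈ I, bB (tf s) q = 0
  hunit : ∀ s ∈ I, bB (deriv f s) (deriv f s) = 1
  htang : ∀ s ∈ I, deriv tf s = -(k s) • deriv f s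

lemma bB_symm (x y : V) : bB x y = bB y x := by simp only [bB]; ring

lemma bB_add_left (x y z : V) : bB (x + y) z = bB x z + bB y z := by
  simp only [bB, Pi.add_apply]; ring

lemma bB_sub_left (x y z : V) : bB (x - y) z = bB x z - bB y z := by
  simp only [bB, Pi.sub_apply]; ring

lemma bB_smul_left (a : ℝ) (x y : V) : bB (a • x) y = a * bB x y := by
  simp only [bB, Pi.smul_apply, smul_eq_mul]; ring

lemma bB_add_right (x y z : V) : bB x (y + z) = bB x y + bB x z := by
  simp only [bB, Pi.add_apply]; ring

lemma bB_sub_right (x y z : V) : bB x (y - z) = bB x y - bB x z := by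
  simp only [bB, Pi.sub_apply]; ring

lemma bB_smul_right (a : ℝ) (x y : V) : bB x (a • y) = a * bB x y := by
  simp only [bB, Pi.smul_apply, smul_eq_mul]; ring

lemma bB_neg_left (x y : V) : bB (-x) y = -bB x y := by
  simp only [bB, Pi.neg_apply]; ring

lemma bB_neg_right (x y : V) : bB x (-y) = -bB x y := by
  simp only [bB, Pi.neg_apply]; ring

lemma bB_zero_left (y : V) : bB 0 y = 0 := by simp [bB]

lemma bB_zero_right (x : V) : bB x 0 = 0 := by simp [bB]

lemma hasDerivAt_bB {g h : ℝ → V} {g' h' : V} {s : ℝ}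
    (hg : HasDerivAt g g' s) (hh : HasDerivAt h h' s) :
    HasDerivAt (fun t => bB (g t) (h t)) (bB g' (h s) + bB (g s) h') s := by
  have hgi := hasDerivAt_pi.1 hg
  have hhi := hasDerivAt_pi.1 hh
  have H := (((((hgi 0).mul (hhi 0)).add ((hgi 1).mul (hhi 1))).add
      ((hgi 2).mul (hhi 2))).sub ((hgi 3).mul (hhi 3))).sub ((hgi 4).mul (hhi 4))
  simp only [bB]
  exact H.congr_deriv (by ring)

lemma hasDerivAt_eq_zero_of_const {E : Type*} [NormedAddCommGroup E] [NormedSpace ℝ E]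
    {I : Set ℝ} (hI : IsOpen I) {u : ℝ → E} {c : E} {u' : E} {s : ℝ}
    (hs : s ∈ I) (hc : ∀ t ∈ I, u t = c) (h : HasDerivAt u u' s) : u' = 0 := by
  have hEq : u =ᶠ[nhds s] (fun _ => c) :=
    Filter.eventually_of_mem (hI.mem_nhds hs) hc
  have h0 : HasDerivAt u 0 s := (hasDerivAt_const s c).congr_of_eventuallyEq hEq
  exact h.unique h0

lemma frame_eq_zero (v : Fin 5 → V) (G : Matrix (Fin 5) (Fin 5) ℝ)
    (hG : ∀ i j, bB (v i) (v j) = G i j) (hdet : G.det ≠ 0)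
    (x : V) (hx : ∀ i, bB (v i) x = 0) : x = 0 := by
  classical
  set ε : Fin 5 → ℝ := ![1, 1, 1, -1, -1] with hε
  set A : Matrix (Fin 5) (Fin 5) ℝ := Matrix.of (fun i j => v i j * ε j) with hA
  set M : Matrix (Fin 5) (Fin 5) ℝ := Matrix.of (fun i j => v i j) with hM
  have hAM : A * M.transpose = G := by
    ext i j
    rw [← hG i j]
    simp only [Matrix.mul_apply, Matrix.transpose_apply, Fin.sum_univ_five, hA, hM, hε,
      Matrix.of_apply, bB, Matrix.cons_val_zero, Matrix.cons_val_one, Matrix.head_cons,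
      Matrix.cons_val_two, Matrix.tail_cons, Matrix.cons_val_three, Matrix.cons_val_four]
    ring
  have hdetA : A.det ≠ 0 := by
    intro h0
    apply hdet
    rw [← hAM, Matrix.det_mul, h0, zero_mul]
  have hAx : A.mulVec x = 0 := by
    funext i
    have hxi := hx i
    simp only [bB] at hxi
    simp only [Matrix.mulVec, dotProduct, Fin.sum_univ_five, hA, hε, Matrix.of_apply,
      Matrix.cons_val_zero, Matrix.cons_val_one, Matrix.head_cons, Matrix.cons_val_two,
      Matrix.tail_cons, Matrix.cons_val_three, Matrix.cons_val_four, Pi.zero_apply]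
    linarith [hxi]
  exact Matrix.eq_zero_of_mulVec_eq_zero hdetA hAx

lemma detG (κ χ : ℝ) :
    (!![(0:ℝ), 0, 0, -1, 0; 0, 0, 0, 0, -1; 0, 0, 1, 0, 0; -1, 0, 0, -κ, 0;
        0, -1, 0, 0, -χ]).det = 1 := by
  simp [Matrix.det_succ_row_zero, Fin.sum_univ_succ]
  simp [Fin.succAbove, Fin.lt_def]
  norm_num


/-- properties of the vector field
`𝔯 = −(kκ+λ)𝔣 + ((χ/2)k²+μ)𝔱 − k′𝔣′ + k𝔮 − (k²/2)𝔭`: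
it is orthogonal to `𝔱 + (k/2)𝔣`, its derivative is `−(k″+(χ/2)k³+(μ+κ)k+λ)𝔣′` (so it is
constant iff the constrained elastic equation holds), and it is nonzero away from the
degenerate case `λ = μ = k = k′ = 0`. -/
theorem stmt9 (I : Set ℝ) (p q : V) (χ κ : ℝ) (f tf : ℝ → V) (k : ℝ → ℝ)
    (h : SpaceFormFrame I p q χ κ f tf k) (lam mu : ℝ)
    (r : ℝ → V)
    (hr : ∀ s, r s = (-(k s * κ + lam)) • f s + (χ / 2 * (k s) ^ 2 + mu) • tf s
      - (deriv k s) • deriv f s + (k s) • q - ((k s) ^ 2 / 2) • p) :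
    (∀ s ∈ I, bB (tf s + (k s / 2) • f s) (r s) = 0) ∧
    (∀ s ∈ I, deriv r s =
      (-(deriv (deriv k) s + χ / 2 * (k s) ^ 3 + (mu + κ) * k s + lam)) • deriv f s) ∧
    ((∀ s ∈ I, ∀ s' ∈ I, r s = r s') ↔
      (∀ s ∈ I, deriv (deriv k) s + χ / 2 * (k s) ^ 3 + (mu + κ) * k s + lam = 0)) ∧
    (∀ s ∈ I, (lam ≠ 0 ∨ mu ≠ 0 ∨ k s ≠ 0 ∨ deriv k s ≠ 0) → r s ≠ 0) := by
  obtain ⟨hI, hOC, hχ, hq0, hpp, hqq, hpq, sf, st, sk, hff, htt, hft, hfq, hfp, htp, htq,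
    hunit, htang⟩ := h
  have hfd : ∀ s ∈ I, HasDerivAt f (deriv f s) s := fun s hs =>
    ((sf.differentiableOn (by simp)).differentiableAt (hI.mem_nhds hs)).hasDerivAt
  have htd : ∀ s ∈ I, HasDerivAt tf (deriv tf s) s := fun s hs =>
    ((st.differentiableOn (by simp)).differentiableAt (hI.mem_nhds hs)).hasDerivAt
  have hkd : ∀ s ∈ I, HasDerivAt k (deriv k s) s := fun s hs =>
    ((sk.differentiableOn (by simp)).differentiableAt (hI.mem_nhds hs)).hasDerivAt
  have sf' : ContDiffOn ℝ (⊤ : ℕ∞) (deriv f) I := sf.deriv_of_isOpen hI (by simp)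
  have sk' : ContDiffOn ℝ (⊤ : ℕ∞) (deriv k) I := sk.deriv_of_isOpen hI (by simp)
  have hfd' : ∀ s ∈ I, HasDerivAt (deriv f) (deriv (deriv f) s) s := fun s hs =>
    ((sf'.differentiableOn (by simp)).differentiableAt (hI.mem_nhds hs)).hasDerivAt
  have hkd' : ∀ s ∈ I, HasDerivAt (deriv k) (deriv (deriv k) s) s := fun s hs =>
    ((sk'.differentiableOn (by simp)).differentiableAt (hI.mem_nhds hs)).hasDerivAt
  -- first-order identities
  have hA1 : ∀ s ∈ I, bB (deriv f s) (f s) = 0 := by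
    intro s hs
    have h0 := hasDerivAt_eq_zero_of_const hI hs hff (hasDerivAt_bB (hfd s hs) (hfd s hs))
    rw [bB_symm (f s) (deriv f s)] at h0
    linarith
  have hA2 : ∀ s ∈ I, bB (deriv f s) (tf s) = 0 := by
    intro s hs
    have h0 := hasDerivAt_eq_zero_of_const hI hs hft (hasDerivAt_bB (hfd s hs) (htd s hs))
    rw [htang s hs, bB_smul_right, bB_symm (f s) (deriv f s), hA1 s hs] at h0
    linarith
  have hA3 : ∀ s ∈ I, bB (deriv f s) q = 0 := by
    intro s hs
    have h0 := hasDerivAt_eq_zero_of_const hI hs hfq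
      (hasDerivAt_bB (hfd s hs) (hasDerivAt_const s q))
    rw [bB_zero_right] at h0
    linarith
  have hA4 : ∀ s ∈ I, bB (deriv f s) p = 0 := by
    intro s hs
    have h0 := hasDerivAt_eq_zero_of_const hI hs hfp
      (hasDerivAt_bB (hfd s hs) (hasDerivAt_const s p))
    rw [bB_zero_right] at h0
    linarith
  -- second-order identities
  have hC1 : ∀ s ∈ I, bB (deriv (deriv f) s) (f s) = -1 := by
    intro s hs
    have h0 := hasDerivAt_eq_zero_of_const hI hs hA1 (hasDerivAt_bB (hfd' s hs) (hfd s hs))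
    rw [hunit s hs] at h0
    linarith
  have hC2 : ∀ s ∈ I, bB (deriv (deriv f) s) (tf s) = k s := by
    intro s hs
    have h0 := hasDerivAt_eq_zero_of_const hI hs hA2 (hasDerivAt_bB (hfd' s hs) (htd s hs))
    rw [htang s hs, bB_smul_right, hunit s hs] at h0
    linarith
  have hC3 : ∀ s ∈ I, bB (deriv (deriv f) s) (deriv f s) = 0 := by
    intro s hs
    have h0 := hasDerivAt_eq_zero_of_const hI hs hunit (hasDerivAt_bB (hfd' s hs) (hfd' s hs))
    rw [bB_symm (deriv f s) (deriv (deriv f) s)] at h0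
    linarith
  have hC4 : ∀ s ∈ I, bB (deriv (deriv f) s) q = 0 := by
    intro s hs
    have h0 := hasDerivAt_eq_zero_of_const hI hs hA3
      (hasDerivAt_bB (hfd' s hs) (hasDerivAt_const s q))
    rw [bB_zero_right] at h0
    linarith
  have hC5 : ∀ s ∈ I, bB (deriv (deriv f) s) p = 0 := by
    intro s hs
    have h0 := hasDerivAt_eq_zero_of_const hI hs hA4
      (hasDerivAt_bB (hfd' s hs) (hasDerivAt_const s p))
    rw [bB_zero_right] at h0
    linarith
  -- structure equation
  have hstruct : ∀ s ∈ I, deriv (deriv f) s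
      = (-κ) • f s + (χ * k s) • tf s + q - (k s) • p := by
    intro s hs
    have key : deriv (deriv f) s - ((-κ) • f s + (χ * k s) • tf s + q - (k s) • p) = 0 := by
      apply frame_eq_zero ![f s, tf s, deriv f s, q, p]
        (!![0,0,0,-1,0; 0,0,0,0,-1; 0,0,1,0,0; -1,0,0,-κ,0; 0,-1,0,0,-χ])
      · intro i j
        fin_cases i <;> fin_cases j <;>
          simp [hff s hs, hft s hs, htt s hs, hfq s hs, hfp s hs, htp s hs, htq s hs,
            hunit s hs, hA1 s hs, hA2 s hs, hA3 s hs, hA4 s hs, hpp, hqq, hpq,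
            bB_symm (tf s) (f s), bB_symm (f s) (deriv f s), bB_symm (tf s) (deriv f s),
            bB_symm q (f s), bB_symm p (f s), bB_symm q (tf s), bB_symm p (tf s),
            bB_symm q (deriv f s), bB_symm p (deriv f s), bB_symm q p,
            Matrix.vecHead, Matrix.vecTail]
      · rw [detG]; norm_num
      · intro i
        fin_cases i <;>
          simp [bB_sub_right, bB_add_right, bB_smul_right, bB_neg_right, bB_neg_left,
            hff s hs, hft s hs, htt s hs, hfq s hs, hfp s hs, htp s hs, htq s hs,
            hunit s hs, hA1 s hs, hA2 s hs, hA3 s hs, hA4 s hs, hpp, hqq, hpq,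
            hC1 s hs, hC2 s hs, hC3 s hs, hC4 s hs, hC5 s hs,
            bB_symm (f s) (deriv (deriv f) s), bB_symm (tf s) (deriv (deriv f) s),
            bB_symm (deriv f s) (deriv (deriv f) s), bB_symm q (deriv (deriv f) s),
            bB_symm p (deriv (deriv f) s),
            bB_symm (tf s) (f s), bB_symm (f s) (deriv f s), bB_symm (tf s) (deriv f s),
            bB_symm q (f s), bB_symm p (f s), bB_symm q (tf s), bB_symm p (tf s),
            bB_symm q (deriv f s), bB_symm p (deriv f s), bB_symm q p] <;>
          ring
    have := sub_eq_zero.mp key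
    exact this
  -- pairings of r
  have hrf : ∀ s ∈ I, bB (r s) (f s) = -(k s) := by
    intro s hs
    rw [hr s]
    simp only [bB_add_left, bB_sub_left, bB_smul_left]
    rw [hff s hs, bB_symm (tf s) (f s), hft s hs, hA1 s hs, bB_symm q (f s), hfq s hs,
      bB_symm p (f s), hfp s hs]
    ring
  have hrt : ∀ s ∈ I, bB (r s) (tf s) = k s ^ 2 / 2 := by
    intro s hs
    rw [hr s]
    simp only [bB_add_left, bB_sub_left, bB_smul_left]
    rw [hft s hs, htt s hs, hA2 s hs, bB_symm q (tf s), htq s hs, bB_symm p (tf s), htp s hs]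
    ring
  have hrf' : ∀ s ∈ I, bB (r s) (deriv f s) = -(deriv k s) := by
    intro s hs
    rw [hr s]
    simp only [bB_add_left, bB_sub_left, bB_smul_left]
    rw [bB_symm (f s) (deriv f s), hA1 s hs, bB_symm (tf s) (deriv f s), hA2 s hs,
      hunit s hs, bB_symm q (deriv f s), hA3 s hs, bB_symm p (deriv f s), hA4 s hs]
    ring
  have hrq : ∀ s ∈ I, bB (r s) q = lam := by
    intro s hs
    rw [hr s]
    simp only [bB_add_left, bB_sub_left, bB_smul_left]
    rw [hfq s hs, htq s hs, hA3 s hs, hqq, hpq]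
    ring
  have hrp : ∀ s ∈ I, bB (r s) p = -mu := by
    intro s hs
    rw [hr s]
    simp only [bB_add_left, bB_sub_left, bB_smul_left]
    rw [hfp s hs, htp s hs, hA4 s hs, bB_symm q p, hpq, hpp]
    ring
  -- derivative of r
  have hrd : ∀ s ∈ I, HasDerivAt r
      ((-(deriv (deriv k) s + χ / 2 * (k s) ^ 3 + (mu + κ) * k s + lam)) • deriv f s) s := by
    intro s hs
    have hc1 : HasDerivAt (fun t => -(k t * κ + lam)) (-(deriv k s * κ)) s :=
      (((hkd s hs).mul_const κ).add_const lam).neg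
    have hc2 : HasDerivAt (fun t => χ / 2 * (k t) ^ 2 + mu) (χ * k s * deriv k s) s := by
      have h2 := (((hkd s hs).pow 2).const_mul (χ / 2)).add_const mu
      exact h2.congr_deriv (by ring)
    have hc5 : HasDerivAt (fun t => (k t) ^ 2 / 2) (k s * deriv k s) s := by
      have h2 := ((hkd s hs).pow 2).div_const 2
      exact h2.congr_deriv (by ring)
    have H := ((((hc1.smul (hfd s hs)).add (hc2.smul (htd s hs))).sub
        ((hkd' s hs).smul (hfd' s hs))).add ((hkd s hs).smul_const q)).sub (hc5.smul_const p)
    have hfun : r = fun t => (-(k t * κ + lam)) • f t + (χ / 2 * (k t) ^ 2 + mu) • tf t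
        - (deriv k t) • deriv f t + (k t) • q - ((k t) ^ 2 / 2) • p := funext hr
    rw [hfun]
    refine H.congr_deriv ?_
    rw [htang s hs, hstruct s hs]
    funext i
    simp only [Pi.add_apply, Pi.sub_apply, Pi.smul_apply, Pi.neg_apply, smul_eq_mul]
    ring
  have hrderiv : ∀ s ∈ I, deriv r s =
      (-(deriv (deriv k) s + χ / 2 * (k s) ^ 3 + (mu + κ) * k s + lam)) • deriv f s :=
    fun s hs => (hrd s hs).deriv
  have hfne : ∀ s ∈ I, deriv f s ≠ 0 := by
    intro s hs hz
    have h1 := hunit s hs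
    rw [hz, bB_zero_left] at h1
    norm_num at h1
  refine ⟨?_, hrderiv, ?_, ?_⟩
  · intro s hs
    rw [bB_add_left, bB_smul_left, bB_symm (tf s) (r s), hrt s hs, bB_symm (f s) (r s),
      hrf s hs]
    ring
  · constructor
    · intro hconst s hs
      have h0 := hasDerivAt_eq_zero_of_const hI hs
        (fun t ht => hconst t ht s hs) (hrd s hs)
      rcases smul_eq_zero.mp h0 with hE | hv
      · linarith
      · exact absurd hv (hfne s hs)
    · intro hode s hs s' hs'
      have hconv : Convex ℝ I := convex_iff_ordConnected.mpr hOC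
      have hdiff : DifferentiableOn ℝ r I := fun t ht =>
        ((hrd t ht).differentiableAt).differentiableWithinAt
      have hfz : ∀ t ∈ I, fderivWithin ℝ r I t = 0 := by
        intro t ht
        rw [fderivWithin_of_isOpen hI ht]
        have h0 : HasDerivAt r 0 t := by
          have h1 := hrd t ht
          rw [hode t ht] at h1
          simpa using h1
        have hF := hasDerivAt_iff_hasFDerivAt.mp h0
        rw [hF.fderiv]
        ext y
        simp
      exact hconv.is_const_of_fderivWithin_eq_zero hdiff hfz hs hs'
  · intro s hs hcase h0
    have h1 : lam = 0 := by have := hrq s hs; rw [h0, bB_zero_left] at this; linarith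
    have h2 : mu = 0 := by have := hrp s hs; rw [h0, bB_zero_left] at this; linarith
    have h3 : k s = 0 := by have := hrf s hs; rw [h0, bB_zero_left] at this; linarith
    have h4 : deriv k s = 0 := by have := hrf' s hs; rw [h0, bB_zero_left] at this; linarith
    rcases hcase with hc | hc | hc | hc <;> exact hc (by assumption)
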